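/- The function φ(x,y) = h⁻¹(x) * h⁻¹(y) is jointly convex on [0,1]², i.e. (x,y) ↦ h⁻¹(x)(1−h⁻¹(y)) + h⁻¹(y)(1−h⁻¹(x)) is a convex function of (x,y) ∈ [0,1]². -/

import Mathlib

open Finset Asymptotics Filter

/-- Binary entropy function (base-2 logarithms). -/
noncomputable def binEnt (p : ℝ) : ℝ :=
  -(p * Real.logb 2 p) - (1 - p) * Real.logb 2 (1 - p)

/-- Inverse of the binary entropy function restricted to `[0, 1/2]`. -/
noncomputable def binEntInv (x : ℝ) : ℝ :=
  sSup {p : ℝ | p ∈ Set.Icc (0:ℝ) (1/2) ∧ binEnt p ≤ x}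

/-- `p*q = p(1-q) + q(1-p)`. -/
def pstar (p q : ℝ) : ℝ := p * (1 - q) + q * (1 - p)

/-- Probability of the rectangle `A × B` for `ρ`-correlated uniform binary strings. -/
noncomputable def Pxy (n : ℕ) (ρ : ℝ) (A B : Finset (Fin n → Bool)) : ℝ :=
  ∑ a ∈ A, ∑ b ∈ B,
    (2:ℝ)⁻¹ ^ n * ((1 + ρ)/2) ^ n * ((1 - ρ)/(1 + ρ)) ^ (hammingDist a b)

/-- Hamming sphere of radius `j` around the all-zeros string in `{0,1}^n`. -/
def hSphere (n j : ℕ) : Finset (Fin n → Bool) :=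
  Finset.univ.filter (fun x => (Finset.univ.filter (fun i => x i = true)).card = j)

/-- The exponent function `w_d(α,β)`. -/
noncomputable def wd (α β d : ℝ) : ℝ :=
  α + binEntInv α * binEnt (1/2 + (binEntInv β - d)/(2 * binEntInv α))
    + (1 - binEntInv α) * binEnt (1/2 + (d - (1 - binEntInv β))/(2 * (1 - binEntInv α)))

/-- The noise operator `T_ρ`. -/
noncomputable def Tnoise (n : ℕ) (ρ : ℝ) (f : (Fin n → Bool) → ℝ) (y : Fin n → Bool) : ℝ :=
  ∑ x : Fin n → Bool,
    f x * ((1 + ρ)/2) ^ (n - hammingDist x y) * ((1 - ρ)/2) ^ (hammingDist x y)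

/-- The normalized `p`-norm on functions on the hypercube. -/
noncomputable def pNorm (n : ℕ) (p : ℝ) (f : (Fin n → Bool) → ℝ) : ℝ :=
  ((2:ℝ)⁻¹ ^ n * ∑ x : Fin n → Bool, |f x| ^ p) ^ (1/p)

/-- Indicator function of a set `A ⊆ {0,1}^n`. -/
def indA (n : ℕ) (A : Finset (Fin n → Bool)) : (Fin n → Bool) → ℝ :=
  fun x => if x ∈ A then 1 else 0


/-!
Write `u = 1 - 2 h⁻¹`, so that `h⁻¹(x) * h⁻¹(y) = (1 - u(x) u(y)) / 2`; it suffices that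
`(x, y) ↦ u(x) u(y)` is concave. As `u ≥ 0`, this follows from the concavity of `u²` by
Cauchy–Schwarz: `(a u₁v₁ + b u₂v₂)² ≤ (a u₁² + b u₂²)(a v₁² + b v₂²) ≤ u(x)² u(y)²` at the
convex combinations `x`, `y`. At `x = h(p)` the derivative of `u²` is
`-4 log 2 · (1 - 2p) / log ((1 - p) / p)`, and `(1 - 2p) / log ((1 - p) / p)` increases in `p`
because `2 log t ≤ t - 1/t` for `t ≥ 1` (that is, `s ≤ sinh s` at `s = log t`); hence `u²` is concave.
-/

open Real Set

lemma binEnt_eq_binEntropy_div : binEnt = fun p => binEntropy p / log 2 := by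
  funext p
  simp only [binEnt, binEntropy, logb, log_inv]
  ring

lemma binEnt_zero : binEnt 0 = 0 := by simp [binEnt_eq_binEntropy_div]

lemma binEnt_half : binEnt (1/2) = 1 := by
  simp [binEnt_eq_binEntropy_div, (log_pos one_lt_two).ne']

lemma binEnt_continuous : Continuous binEnt := by
  rw [binEnt_eq_binEntropy_div]
  fun_prop

lemma binEnt_strictMonoOn : StrictMonoOn binEnt (Icc 0 (1/2)) := by
  intro p hp q hq hpq
  rw [binEnt_eq_binEntropy_div, div_lt_div_iff_of_pos_right (log_pos one_lt_two)]
  exact binEntropy_strictMonoOn (by simpa using hp) (by simpa using hq) hpq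

lemma hasDerivAt_binEnt {p : ℝ} (hp₀ : p ≠ 0) (hp₁ : p ≠ 1) :
    HasDerivAt binEnt ((log (1 - p) - log p) / log 2) p := by
  rw [binEnt_eq_binEntropy_div]
  exact (hasDerivAt_binEntropy hp₀ hp₁).div_const _

lemma binEntInv_nonneg (x : ℝ) : 0 ≤ binEntInv x :=
  Real.sSup_nonneg fun _ hq => hq.1.1

lemma binEntInv_le_half (x : ℝ) : binEntInv x ≤ 1/2 :=
  Real.sSup_le (fun _ hq => hq.1.2) (by norm_num)

lemma binEntInv_monotone : Monotone binEntInv := by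
  intro x y hxy
  rcases {p | p ∈ Icc (0:ℝ) (1/2) ∧ binEnt p ≤ x}.eq_empty_or_nonempty with he | hne
  · rw [binEntInv, he, Real.sSup_empty]
    exact binEntInv_nonneg y
  · exact csSup_le_csSup ⟨1/2, fun _ hq => hq.1.2⟩ hne fun _ hq => ⟨hq.1, hq.2.trans hxy⟩

lemma binEntInv_binEnt {p : ℝ} (hp : p ∈ Icc (0:ℝ) (1/2)) : binEntInv (binEnt p) = p :=
  IsGreatest.csSup_eq ⟨⟨hp, le_rfl⟩, fun _ hq => (binEnt_strictMonoOn.le_iff_le hq.1 hp).1 hq.2⟩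

lemma binEnt_binEntInv {x : ℝ} (hx : x ∈ Icc (0:ℝ) 1) : binEnt (binEntInv x) = x := by
  rw [← binEnt_zero, ← binEnt_half] at hx
  obtain ⟨p, hp, rfl⟩ :=
    intermediate_value_Icc (by norm_num) binEnt_continuous.continuousOn hx
  rw [binEntInv_binEnt hp]

lemma binEntInv_mem_Ioo {x : ℝ} (hx : x ∈ Ioo (0:ℝ) 1) : binEntInv x ∈ Ioo (0:ℝ) (1/2) := by
  have hE := binEnt_binEntInv (Ioo_subset_Icc_self hx)
  refine ⟨(binEntInv_nonneg x).lt_of_ne ?_, (binEntInv_le_half x).lt_of_ne ?_⟩ <;> rintro h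
  · rw [← h, binEnt_zero] at hE
    exact hx.1.ne hE
  · rw [h, binEnt_half] at hE
    exact hx.2.ne' hE

lemma binEntInv_of_nonpos {x : ℝ} (hx : x ≤ 0) : binEntInv x = 0 := by
  have h := binEntInv_monotone hx
  rw [← binEnt_zero, binEntInv_binEnt (by norm_num)] at h
  exact h.antisymm (binEntInv_nonneg x)

lemma binEntInv_of_one_le {x : ℝ} (hx : 1 ≤ x) : binEntInv x = 1/2 := by
  have h := binEntInv_monotone hx
  rw [← binEnt_half, binEntInv_binEnt (by norm_num)] at h
  exact (binEntInv_le_half x).antisymm h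

/-- Adding back what the clamping to `[0, 1/2]` removes outside `[0, 1]` turns `binEntInv` into a
monotone surjection `ℝ → ℝ`, and such a map is continuous. -/
lemma continuous_binEntInv : Continuous binEntInv := by
  set F : ℝ → ℝ := fun x => binEntInv x + min x 0 + max (x - 1) 0
  have hF_mono : Monotone F := fun x y hxy => by
    have := binEntInv_monotone hxy
    simp only [F]
    gcongr
  have hF_surj : Function.Surjective F := by
    intro y
    rcases le_or_gt y 0 with hy | hy
    · refine ⟨y, ?_⟩
      simp only [F, binEntInv_of_nonpos hy]
      rw [min_eq_left hy, max_eq_right (by linarith)]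
      ring
    rcases le_or_gt y (1/2) with hy' | hy'
    · have hy_mem : y ∈ Icc (0:ℝ) (1/2) := ⟨hy.le, hy'⟩
      have hE : binEnt y ∈ Icc (0:ℝ) 1 := by
        rw [← binEnt_zero, ← binEnt_half]
        exact ⟨binEnt_strictMonoOn.monotoneOn (by norm_num) hy_mem hy.le,
          binEnt_strictMonoOn.monotoneOn hy_mem (by norm_num) hy'⟩
      refine ⟨binEnt y, ?_⟩
      simp only [F, binEntInv_binEnt hy_mem]
      rw [min_eq_right hE.1, max_eq_right (by linarith [hE.2])]
      ring
    · refine ⟨y + 1/2, ?_⟩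
      simp only [F, binEntInv_of_one_le (show 1 ≤ y + 1/2 by linarith)]
      rw [min_eq_right (by linarith), max_eq_left (by linarith)]
      ring
  have hF_cont : Continuous F := hF_mono.continuous_of_surjective hF_surj
  have : binEntInv = fun x => F x - min x 0 - max (x - 1) 0 := by
    funext x; simp only [F]; ring
  rw [this]
  fun_prop

lemma hasDerivAt_binEntInv {x : ℝ} (hx : x ∈ Ioo (0:ℝ) 1) :
    HasDerivAt binEntInv (log 2 / (log (1 - binEntInv x) - log (binEntInv x))) x := by
  obtain ⟨hp₀, hp₁⟩ := binEntInv_mem_Ioo hx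
  have hlog : log (binEntInv x) < log (1 - binEntInv x) := log_lt_log hp₀ (by linarith)
  rw [← inv_div]
  refine HasDerivAt.of_local_left_inverse continuous_binEntInv.continuousAt
    (hasDerivAt_binEnt hp₀.ne' (by linarith))
    (div_pos (sub_pos.2 hlog) (log_pos one_lt_two)).ne' ?_
  filter_upwards [isOpen_Ioo.mem_nhds hx] with y hy
  exact binEnt_binEntInv (Ioo_subset_Icc_self hy)

lemma two_mul_log_le_sub_inv {t : ℝ} (ht : 1 ≤ t) : 2 * log t ≤ t - t⁻¹ := by
  have h := self_le_sinh_iff.2 (log_nonneg ht)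
  rw [sinh_log (by linarith)] at h
  linarith

lemma monotoneOn_one_sub_two_mul_div_log_sub_log :
    MonotoneOn (fun p => (1 - 2 * p) / (log (1 - p) - log p)) (Ioo 0 (1/2)) := by
  have hderiv : ∀ p ∈ Ioo (0:ℝ) (1/2), HasDerivAt (fun p => (1 - 2 * p) / (log (1 - p) - log p))
      ((-2 * (log (1 - p) - log p) - (1 - 2 * p) * (-(1 - p)⁻¹ - p⁻¹))
        / (log (1 - p) - log p) ^ 2) p := by
    rintro p ⟨hp₀, hp₁⟩
    have hlog : log p < log (1 - p) := log_lt_log hp₀ (by linarith)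
    have h_one_sub : HasDerivAt (fun q => log (1 - q)) (-(1 - p)⁻¹) p := by
      simpa [neg_div, div_eq_mul_inv] using ((hasDerivAt_id' p).const_sub 1).log (by linarith)
    refine HasDerivAt.div ?_ (h_one_sub.sub (hasDerivAt_log hp₀.ne')) (sub_pos.2 hlog).ne'
    simpa using ((hasDerivAt_id p).const_mul 2).const_sub 1
  refine monotoneOn_of_deriv_nonneg (convex_Ioo 0 (1/2))
    (fun p hp => (hderiv p hp).continuousAt.continuousWithinAt) ?_ ?_ <;> rw [interior_Ioo]
  · exact fun p hp => (hderiv p hp).differentiableAt.differentiableWithinAt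
  · intro p hp
    obtain ⟨hp₀, hp₁⟩ := hp
    rw [(hderiv p ⟨hp₀, hp₁⟩).deriv]
    have hlog := two_mul_log_le_sub_inv ((one_le_div hp₀).2 (by linarith : p ≤ 1 - p))
    rw [log_div (by linarith) hp₀.ne', inv_div] at hlog
    have hkey : (1 - p) / p - p / (1 - p) = -((1 - 2 * p) * (-(1 - p)⁻¹ - p⁻¹)) := by
      have : 1 - p ≠ 0 := by linarith
      field_simp
      ring
    exact div_nonneg (by linarith) (sq_nonneg _)

lemma concaveOn_one_sub_two_mul_binEntInv_sq :
    ConcaveOn ℝ (Icc 0 1) (fun x => (1 - 2 * binEntInv x) ^ 2) := by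
  have hderiv : ∀ x ∈ Ioo (0:ℝ) 1, HasDerivAt (fun x => (1 - 2 * binEntInv x) ^ 2)
      (-4 * log 2 * ((1 - 2 * binEntInv x) / (log (1 - binEntInv x) - log (binEntInv x)))) x := by
    intro x hx
    refine ((((hasDerivAt_binEntInv hx).const_mul 2).const_sub 1).fun_pow 2).congr_deriv ?_
    ring
  refine AntitoneOn.concaveOn_of_deriv (convex_Icc 0 1)
    (by have := continuous_binEntInv; fun_prop) ?_ ?_ <;>
    rw [interior_Icc]
  · exact fun x hx => (hderiv x hx).differentiableAt.differentiableWithinAt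
  · intro x hx y hy hxy
    rw [(hderiv x hx).deriv, (hderiv y hy).deriv]
    have := monotoneOn_one_sub_two_mul_div_log_sub_log (binEntInv_mem_Ioo hx)
      (binEntInv_mem_Ioo hy) (binEntInv_monotone hxy)
    have := log_pos one_lt_two
    nlinarith

lemma concaveOn_prod_mul_of_concaveOn_sq {E F : Type*} [AddCommGroup E] [Module ℝ E]
    [AddCommGroup F] [Module ℝ F] {s : Set E} {t : Set F} {f : E → ℝ} {g : F → ℝ}
    (hf : ConcaveOn ℝ s fun x => f x ^ 2) (hg : ConcaveOn ℝ t fun y => g y ^ 2)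
    (hf₀ : ∀ x ∈ s, 0 ≤ f x) (hg₀ : ∀ y ∈ t, 0 ≤ g y) :
    ConcaveOn ℝ (s ×ˢ t) fun z => f z.1 * g z.2 := by
  refine ⟨hf.1.prod hg.1, ?_⟩
  rintro ⟨x₁, y₁⟩ ⟨hx₁, hy₁⟩ ⟨x₂, y₂⟩ ⟨hx₂, hy₂⟩ a b ha hb hab
  simp only [Prod.smul_mk, Prod.mk_add_mk, smul_eq_mul]
  have hfx := hf.2 hx₁ hx₂ ha hb hab
  have hgy := hg.2 hy₁ hy₂ ha hb hab
  simp only [smul_eq_mul] at hfx hgy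
  set U := f (a • x₁ + b • x₂)
  set V := g (a • y₁ + b • y₂)
  have hU : 0 ≤ U := hf₀ _ (hf.1 hx₁ hx₂ ha hb hab)
  have hV : 0 ≤ V := hg₀ _ (hg.1 hy₁ hy₂ ha hb hab)
  have h_cauchy_schwarz : (a * (f x₁ * g y₁) + b * (f x₂ * g y₂)) ^ 2
      ≤ (a * f x₁ ^ 2 + b * f x₂ ^ 2) * (a * g y₁ ^ 2 + b * g y₂ ^ 2) := by
    nlinarith [mul_nonneg (mul_nonneg ha hb) (sq_nonneg (f x₁ * g y₂ - f x₂ * g y₁))]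
  have h_sq : (a * (f x₁ * g y₁) + b * (f x₂ * g y₂)) ^ 2 ≤ (U * V) ^ 2 :=
    h_cauchy_schwarz.trans <| by
      rw [mul_pow]
      exact mul_le_mul hfx hgy (by positivity) (sq_nonneg U)
  exact (abs_le_of_sq_le_sq' h_sq (mul_nonneg hU hV)).2

/-- `(x,y) ↦ h⁻¹(x) * h⁻¹(y)` is jointly convex on `[0,1]²`. -/
theorem stmt_13 :
    ConvexOn ℝ (Set.Icc (0:ℝ) 1 ×ˢ Set.Icc (0:ℝ) 1)
      (fun p : ℝ × ℝ =>
        binEntInv p.1 * (1 - binEntInv p.2) + binEntInv p.2 * (1 - binEntInv p.1)) := by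
  have hu₀ : ∀ x ∈ Icc (0:ℝ) 1, 0 ≤ 1 - 2 * binEntInv x := fun x _ => by
    linarith [binEntInv_le_half x]
  have hconc := concaveOn_prod_mul_of_concaveOn_sq concaveOn_one_sub_two_mul_binEntInv_sq
    concaveOn_one_sub_two_mul_binEntInv_sq hu₀ hu₀
  refine (((convexOn_const 1 hconc.1).sub hconc).smul (c := 1/2) (by norm_num)).congr ?_
  intro z _
  simp only [Pi.sub_apply, smul_eq_mul]
  ring
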